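/- arXiv:1702.00569 — 5 statements merged into one kernel-verified Lean document; each statement's English description precedes it below -/
import Mathlib

section
/- For integers 0 ≤ d ≤ n/2, the number of subsets G = {s_1 < s_2 < ... < s_j} of [n] with j ≤ d and s_i ≥ 2i for all 1 ≤ i ≤ j equals the binomial coefficient C(n, d). -/
open scoped Classical
open Finset

private def ballot (n d : ℕ) : Finset (Finset ℕ) :=
  (((Finset.Icc 1 n).powerset).filter
      (fun G => G.card ≤ d ∧ ∀ s ∈ G, 2 * (G.filter (· ≤ s)).card ≤ s))

private lemma mem_ballot {n d : ℕ} {G : Finset ℕ} :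
    G ∈ ballot n d ↔ G ⊆ Finset.Icc 1 n ∧ G.card ≤ d ∧
      ∀ s ∈ G, 2 * (G.filter (· ≤ s)).card ≤ s := by
  simp [ballot, Finset.mem_filter, Finset.mem_powerset, and_assoc]

private lemma two_mul_card_le {n : ℕ} {G : Finset ℕ}
    (hG : G ⊆ Finset.Icc 1 n)
    (hb : ∀ s ∈ G, 2 * (G.filter (· ≤ s)).card ≤ s) :
    2 * G.card ≤ n := by
  rcases G.eq_empty_or_nonempty with h | h
  · simp [h]
  · obtain ⟨m, hm, hmax⟩ := G.exists_max_image id h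
    have hfil : G.filter (· ≤ m) = G :=
      Finset.filter_true_of_mem (fun x hx => hmax x hx)
    have h1 := hb m hm
    rw [hfil] at h1
    exact h1.trans (Finset.mem_Icc.mp (hG hm)).2

private lemma ballot_drop {n d : ℕ} (h : n < 2 * d) (hd : 1 ≤ d) :
    ballot n d = ballot n (d - 1) := by
  ext G
  simp only [mem_ballot]
  constructor
  · rintro ⟨h1, h2, h3⟩
    refine ⟨h1, ?_, h3⟩
    have := two_mul_card_le h1 h3
    omega
  · rintro ⟨h1, h2, h3⟩
    exact ⟨h1, by omega, h3⟩

private lemma ballot_rec {n d : ℕ} (hd : 1 ≤ d) (h2 : 2 * d ≤ n + 1) :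
    (ballot (n + 1) d).card = (ballot n d).card + (ballot n (d - 1)).card := by
  classical
  have hun : ballot (n + 1) d
      = ballot n d ∪ (ballot n (d - 1)).image (insert (n + 1)) := by
    ext G
    simp only [Finset.mem_union, Finset.mem_image]
    constructor
    · intro hG
      rw [mem_ballot] at hG
      obtain ⟨h1, hc, h3⟩ := hG
      by_cases hmem : (n + 1) ∈ G
      · right
        refine ⟨G.erase (n + 1), ?_, Finset.insert_erase hmem⟩
        rw [mem_ballot]
        refine ⟨?_, ?_, ?_⟩
        · intro x hx
          have hx' := Finset.mem_erase.mp hx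
          have := Finset.mem_Icc.mp (h1 hx'.2)
          exact Finset.mem_Icc.mpr ⟨this.1, by omega⟩
        · rw [Finset.card_erase_of_mem hmem]; omega
        · intro s hs
          have hs' := Finset.mem_erase.mp hs
          have hsle := Finset.mem_Icc.mp (h1 hs'.2)
          have hfil : (G.erase (n + 1)).filter (· ≤ s) = G.filter (· ≤ s) := by
            rw [Finset.filter_erase]
            apply Finset.erase_eq_of_notMem
            simp only [Finset.mem_filter]
            rintro ⟨-, hle⟩
            have : s = n + 1 := by omega
            exact hs'.1 this
          rw [hfil]
          exact h3 s hs'.2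
      · left
        rw [mem_ballot]
        refine ⟨?_, hc, h3⟩
        intro x hx
        have := Finset.mem_Icc.mp (h1 hx)
        have hxne : x ≠ n + 1 := fun he => hmem (he ▸ hx)
        exact Finset.mem_Icc.mpr ⟨this.1, by omega⟩
    · rintro (hG | ⟨G', hG', rfl⟩)
      · rw [mem_ballot] at hG ⊢
        obtain ⟨h1, hc, h3⟩ := hG
        refine ⟨?_, hc, h3⟩
        intro x hx
        have := Finset.mem_Icc.mp (h1 hx)
        exact Finset.mem_Icc.mpr ⟨this.1, by omega⟩
      · rw [mem_ballot] at hG' ⊢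
        obtain ⟨h1, hc, h3⟩ := hG'
        have hnot : (n + 1) ∉ G' := fun hmem => by
          have := Finset.mem_Icc.mp (h1 hmem); omega
        refine ⟨?_, ?_, ?_⟩
        · intro x hx
          rcases Finset.mem_insert.mp hx with rfl | hx'
          · exact Finset.mem_Icc.mpr ⟨by omega, le_rfl⟩
          · have := Finset.mem_Icc.mp (h1 hx')
            exact Finset.mem_Icc.mpr ⟨this.1, by omega⟩
        · rw [Finset.card_insert_of_notMem hnot]; omega
        · intro s hs
          rcases Finset.mem_insert.mp hs with rfl | hs'
          · have hfil : (insert (n + 1) G').filter (· ≤ n + 1) = insert (n + 1) G' := by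
              apply Finset.filter_true_of_mem
              intro x hx
              rcases Finset.mem_insert.mp hx with rfl | hx'
              · exact le_rfl
              · have := Finset.mem_Icc.mp (h1 hx'); omega
            rw [hfil, Finset.card_insert_of_notMem hnot]
            omega
          · have hsle := Finset.mem_Icc.mp (h1 hs')
            have hfil : (insert (n + 1) G').filter (· ≤ s) = G'.filter (· ≤ s) := by
              rw [Finset.filter_insert, if_neg (by omega)]
            rw [hfil]
            exact h3 s hs'
  have hdisj : Disjoint (ballot n d) ((ballot n (d - 1)).image (insert (n + 1))) := by
    rw [Finset.disjoint_left]
    intro G hG hG'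
    obtain ⟨G', hG'', rfl⟩ := Finset.mem_image.mp hG'
    rw [mem_ballot] at hG
    have := Finset.mem_Icc.mp (hG.1 (Finset.mem_insert_self _ _))
    omega
  have hinj : Set.InjOn (insert (n + 1)) ((ballot n (d - 1) : Finset (Finset ℕ)) : Set (Finset ℕ)) := by
    intro a ha b hb hab
    have hna : (n + 1) ∉ a := fun hmem => by
      have := Finset.mem_Icc.mp ((mem_ballot.mp ha).1 hmem); omega
    have hnb : (n + 1) ∉ b := fun hmem => by
      have := Finset.mem_Icc.mp ((mem_ballot.mp hb).1 hmem); omega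
    rw [← Finset.erase_insert hna, ← Finset.erase_insert hnb, hab]
  rw [hun, Finset.card_union_of_disjoint hdisj, Finset.card_image_of_injOn hinj]

private lemma ballot_zero (n : ℕ) : (ballot n 0).card = 1 := by
  have h : ballot n 0 = {∅} := by
    ext G
    simp only [mem_ballot, Finset.mem_singleton]
    constructor
    · rintro ⟨-, hc, -⟩
      exact Finset.card_eq_zero.mp (Nat.le_zero.mp hc)
    · rintro rfl
      exact ⟨Finset.empty_subset _, by simp, by simp⟩
  rw [h, Finset.card_singleton]

private lemma ballot_card (n : ℕ) : ∀ d : ℕ, 2 * d ≤ n → (ballot n d).card = n.choose d := by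
  induction n with
  | zero =>
    intro d hd
    have : d = 0 := by omega
    subst this
    rw [ballot_zero, Nat.choose_zero_right]
  | succ n ih =>
    intro d hd
    rcases Nat.eq_zero_or_pos d with rfl | hd1
    · rw [ballot_zero, Nat.choose_zero_right]
    · rw [ballot_rec hd1 hd]
      by_cases h : 2 * d ≤ n
      · rw [ih d h, ih (d - 1) (by omega)]
        obtain ⟨k, rfl⟩ : ∃ k, d = k + 1 := ⟨d - 1, by omega⟩
        rw [Nat.choose_succ_succ]
        simp only [Nat.add_sub_cancel, Nat.succ_eq_add_one]
        omega
      · have hn : n + 1 = 2 * d := by omega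
        rw [ballot_drop (by omega) hd1, ih (d - 1) (by omega)]
        obtain ⟨k, rfl⟩ : ∃ k, d = k + 1 := ⟨d - 1, by omega⟩
        have hnk : n = 2 * k + 1 := by omega
        subst hnk
        rw [Nat.choose_succ_succ]
        have hsym : (2 * k + 1).choose (k + 1) = (2 * k + 1).choose k := by
          rw [← Nat.choose_symm (show k ≤ 2 * k + 1 by omega)]
          congr 1
          omega
        simp only [Nat.add_sub_cancel, Nat.succ_eq_add_one] at *
        omega

/-- For integers `0 ≤ d ≤ n/2`, the number of subsets
`G = {s₁ < … < s_j}` of `[n] = {1,…,n}` with `j ≤ d` and `s_i ≥ 2i` for all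
`1 ≤ i ≤ j` (ballot sets of size at most `d`) equals `C(n, d)`.
Here the `i`-th element condition `s_i ≥ 2i` is expressed as
`2 * |{x ∈ G : x ≤ s}| ≤ s` for every `s ∈ G`. -/
theorem stmt0 (n d : ℕ) (hd : 2 * d ≤ n) :
    (((Finset.Icc 1 n).powerset).filter
      (fun G => G.card ≤ d ∧ ∀ s ∈ G, 2 * (G.filter (· ≤ s)).card ≤ s)).card
      = n.choose d := by
  exact ballot_card n d hd
end

section
/- Let 0 < a_1 ≤ a_2 ≤ ... ≤ a_n be integers, 1 < t ≤ n/2, and T ∈ H_t. Then Σ_{i ∈ [2t-1] \ T} a_i ≤ Σ_{i ∈ T \ {2t-1}} a_i < Σ_{i ∈ T} a_i. -/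
/-!
The condition `s_i ≥ 2i` for `i < t` together with `s_t < 2t` forces `s_t = 2t - 1`, so
`T ⊆ [2t-1]` and the complement `C = [2t-1] \ T` has `t - 1` elements, as many as
`T' = T \ {2t-1}`. Below the `k`-th element `s_k ≥ 2k` of `T'`, the interval `[1, s_k]` holds exactly
`k` elements of `T`, hence at least `k` of `C`; so the `k`-th element of `C` is at most `s_k`.
Matching the elements of `C` and `T'` in increasing order and using that `a` is monotone gives the
first inequality; the second holds because `a_{2t-1} > 0`.
-/

def Ht (n t : ℕ) (T : Finset ℕ) : Prop :=
  T ⊆ Finset.Icc 1 n ∧ T.card = t ∧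
  (∀ s ∈ T, (T.filter (· ≤ s)).card < t → 2 * (T.filter (· ≤ s)).card ≤ s) ∧
  (∀ s ∈ T, (T.filter (· ≤ s)).card = t → s < 2 * t)

open Finset

namespace Finset

variable {α : Type*} [LinearOrder α] {m : ℕ}

theorem card_filter_le_orderEmbOfFin (s : Finset α) (h : #s = m) (k : Fin m) :
    #(s.filter (· ≤ s.orderEmbOfFin h k)) = k + 1 := by
  set e := s.orderEmbOfFin h
  have hfilter : s.filter (· ≤ e k) = (Iic k).map e.toEmbedding := by
    ext y
    simp only [mem_filter, mem_map, mem_Iic, RelEmbedding.coe_toEmbedding]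
    constructor
    · rintro ⟨hy, hyk⟩
      obtain ⟨j, rfl⟩ : y ∈ Set.range e := by rwa [range_orderEmbOfFin]
      exact ⟨j, e.le_iff_le.1 hyk, rfl⟩
    · rintro ⟨j, hj, rfl⟩
      exact ⟨orderEmbOfFin_mem s h j, e.le_iff_le.2 hj⟩
  rw [hfilter, card_map, Fin.card_Iic]

theorem orderEmbOfFin_le_iff_lt_card_filter (s : Finset α) (h : #s = m) (k : Fin m) (x : α) :
    s.orderEmbOfFin h k ≤ x ↔ (k : ℕ) < #(s.filter (· ≤ x)) := by
  rw [← Nat.add_one_le_iff, ← card_filter_le_orderEmbOfFin s h k]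
  constructor
  · exact fun hk => card_le_card (monotone_filter_right s fun _ _ hy => hy.trans hk)
  · contrapose!
    intro hx
    refine card_lt_card ⟨monotone_filter_right s fun _ _ hy => hy.trans hx.le, fun hsub => ?_⟩
    have hk := (mem_filter.1 (hsub (mem_filter.2 ⟨orderEmbOfFin_mem s h k, le_rfl⟩))).2
    exact hk.not_gt hx

theorem sum_orderEmbOfFin {β : Type*} [AddCommMonoid β] (s : Finset α) (h : #s = m)
    (f : α → β) : ∑ x ∈ s, f x = ∑ k, f (s.orderEmbOfFin h k) := by
  conv_lhs => rw [← s.map_orderEmbOfFin_univ h, sum_map]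
  rfl

theorem sum_le_sum_of_orderEmbOfFin_le {β : Type*} [AddCommMonoid β] [PartialOrder β]
    [IsOrderedAddMonoid β] {S A B : Finset α} {f : α → β} (hf : MonotoneOn f S)
    (hA : A ⊆ S) (hB : B ⊆ S) (hAm : #A = m) (hBm : #B = m)
    (hAB : ∀ k, A.orderEmbOfFin hAm k ≤ B.orderEmbOfFin hBm k) :
    ∑ x ∈ A, f x ≤ ∑ x ∈ B, f x := by
  rw [sum_orderEmbOfFin A hAm, sum_orderEmbOfFin B hBm]
  exact sum_le_sum fun k _ =>
    hf (hA (orderEmbOfFin_mem A hAm k)) (hB (orderEmbOfFin_mem B hBm k)) (hAB k)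

end Finset

theorem card_filter_le_add_card_Icc_sdiff_filter_le {s : Finset ℕ} {N x : ℕ}
    (hs : s ⊆ Icc 1 N) (hx : x ≤ N) :
    #(s.filter (· ≤ x)) + #((Icc 1 N \ s).filter (· ≤ x)) = x := by
  have hIcc : (Icc 1 N).filter (· ≤ x) = Icc 1 x := by
    ext y
    simp only [mem_filter, mem_Icc]
    omega
  rw [← card_union_of_disjoint (disjoint_filter_filter disjoint_sdiff), ← filter_union,
    union_sdiff_of_subset hs, hIcc, Nat.card_Icc, Nat.add_sub_cancel]

namespace Ht

variable {n t : ℕ} {T : Finset ℕ}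

theorem two_mul_le_orderEmbOfFin (hT : Ht n t T) (k : Fin t) (hk : (k : ℕ) + 1 < t) :
    2 * ((k : ℕ) + 1) ≤ T.orderEmbOfFin hT.2.1 k := by
  have hrank := card_filter_le_orderEmbOfFin T hT.2.1 k
  have := hT.2.2.1 _ (orderEmbOfFin_mem T hT.2.1 k) (hrank ▸ hk)
  rwa [hrank] at this

theorem isGreatest (hT : Ht n t T) (ht : 1 < t) : IsGreatest (T : Set ℕ) (2 * t - 1) := by
  set e := T.orderEmbOfFin hT.2.1
  have hlast : e ⟨t - 1, by omega⟩ < 2 * t := by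
    refine hT.2.2.2 _ (orderEmbOfFin_mem T hT.2.1 _) ?_
    rw [card_filter_le_orderEmbOfFin, Fin.val_mk]
    omega
  have hprev : 2 * (t - 2 + 1) ≤ e ⟨t - 2, by omega⟩ :=
    hT.two_mul_le_orderEmbOfFin ⟨t - 2, by omega⟩ (by simp only; omega)
  have hlt : e ⟨t - 2, by omega⟩ < e ⟨t - 1, by omega⟩ := e.strictMono (Fin.mk_lt_mk.2 (by omega))
  have heq : e ⟨t - 1, by omega⟩ = 2 * t - 1 := by omega
  refine ⟨heq ▸ orderEmbOfFin_mem T hT.2.1 _, fun x hx => ?_⟩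
  obtain ⟨j, rfl⟩ : x ∈ Set.range e := by rwa [range_orderEmbOfFin]
  rw [← heq]
  exact e.monotone (Fin.le_def.2 (Nat.le_sub_one_of_lt j.isLt))

theorem subset_Icc (hT : Ht n t T) (ht : 1 < t) : T ⊆ Icc 1 (2 * t - 1) := fun _ hx =>
  mem_Icc.2 ⟨(mem_Icc.1 (hT.1 hx)).1, (hT.isGreatest ht).2 hx⟩

theorem card_Icc_sdiff (hT : Ht n t T) (ht : 1 < t) : #(Icc 1 (2 * t - 1) \ T) = t - 1 := by
  rw [card_sdiff_of_subset (hT.subset_Icc ht), Nat.card_Icc, hT.2.1]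
  omega

theorem card_erase (hT : Ht n t T) (ht : 1 < t) : #(T.erase (2 * t - 1)) = t - 1 := by
  rw [card_erase_of_mem (hT.isGreatest ht).1, hT.2.1]

theorem orderEmbOfFin_Icc_sdiff_le (hT : Ht n t T) (ht : 1 < t) (k : Fin (t - 1)) :
    (Icc 1 (2 * t - 1) \ T).orderEmbOfFin (hT.card_Icc_sdiff ht) k ≤
      (T.erase (2 * t - 1)).orderEmbOfFin (hT.card_erase ht) k := by
  set x := (T.erase (2 * t - 1)).orderEmbOfFin (hT.card_erase ht) k
  have hxT' : x ∈ T.erase (2 * t - 1) := orderEmbOfFin_mem _ _ k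
  have hxT : x ∈ T := mem_of_mem_erase hxT'
  have hx : x < 2 * t - 1 := ((hT.isGreatest ht).2 hxT).lt_of_ne (ne_of_mem_erase hxT')
  have hrank : #(T.filter (· ≤ x)) = k + 1 := by
    rw [← card_filter_le_orderEmbOfFin (T.erase _) (hT.card_erase ht) k, filter_erase,
      erase_eq_of_notMem (by simp only [mem_filter, not_and, not_le]; exact fun _ => hx)]
  have hx2 : 2 * ((k : ℕ) + 1) ≤ x := by
    have := hT.2.2.1 x hxT (by omega)
    rwa [hrank] at this
  have hcount := card_filter_le_add_card_Icc_sdiff_filter_le (hT.subset_Icc ht) hx.le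
  rw [orderEmbOfFin_le_iff_lt_card_filter]
  omega

end Ht

theorem stmt3_general (n t : ℕ) (a : ℕ → ℕ)
    (hpos : ∀ i ∈ Finset.Icc 1 n, 0 < a i)
    (hmono : ∀ i j, 1 ≤ i → i ≤ j → j ≤ n → a i ≤ a j)
    (ht : 1 < t) (T : Finset ℕ) (hT : Ht n t T) :
    (∑ i ∈ Finset.Icc 1 (2 * t - 1) \ T, a i) ≤ (∑ i ∈ T.erase (2 * t - 1), a i) ∧
    (∑ i ∈ T.erase (2 * t - 1), a i) < ∑ i ∈ T, a i := by
  have hmem := (hT.isGreatest ht).1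
  have hmonoOn : MonotoneOn a (Icc 1 n : Finset ℕ) := fun i hi j hj hij =>
    hmono i j (mem_Icc.1 hi).1 hij (mem_Icc.1 hj).2
  have hIcc : Icc 1 (2 * t - 1) ⊆ Icc 1 n := Icc_subset_Icc le_rfl (mem_Icc.1 (hT.1 hmem)).2
  exact ⟨sum_le_sum_of_orderEmbOfFin_le hmonoOn (sdiff_subset.trans hIcc)
      ((erase_subset _ _).trans hT.1) _ _ (hT.orderEmbOfFin_Icc_sdiff_le ht),
    sum_erase_lt_of_pos hmem (hpos _ (hT.1 hmem))⟩

/-- for `0 < a₁ ≤ … ≤ a_n`, `1 < t ≤ n/2` and `T ∈ H_t`,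
`Σ_{i ∈ [2t-1] \ T} a_i ≤ Σ_{i ∈ T \ {2t-1}} a_i < Σ_{i ∈ T} a_i`. -/
theorem stmt3 (n t : ℕ) (a : ℕ → ℕ)
    (hpos : ∀ i ∈ Finset.Icc 1 n, 0 < a i)
    (hmono : ∀ i j, 1 ≤ i → i ≤ j → j ≤ n → a i ≤ a j)
    (ht : 1 < t) (htn : 2 * t ≤ n) (T : Finset ℕ) (hT : Ht n t T) :
    (∑ i ∈ Finset.Icc 1 (2 * t - 1) \ T, a i) ≤ (∑ i ∈ T.erase (2 * t - 1), a i) ∧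
    (∑ i ∈ T.erase (2 * t - 1), a i) < ∑ i ∈ T, a i :=
  stmt3_general n t a hpos hmono ht T hT
end

section
/- Let l_1 < l_2 < ... < l_{t-1} be integers in [2t-2] with l_i ≥ 2i for each i. Then there exists an injective map f from {l_1, ..., l_{t-1}} into [2t-2] \ {l_1, ..., l_{t-1}} such that f(l_i) < l_i for every i. -/
/-- if `L = {l₁ < … < l_{t-1}} ⊆ [2t-2]` satisfies the ballot
condition `l_i ≥ 2i`, then there is an injective map `f` from `L` into
`[2t-2] \ L` with `f(x) < x` for all `x ∈ L`. -/
theorem stmt4 (t : ℕ) (ht : 2 ≤ t) (L : Finset ℕ)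
    (hL : L ⊆ Finset.Icc 1 (2 * t - 2)) (hcard : L.card = t - 1)
    (hball : ∀ s ∈ L, 2 * (L.filter (· ≤ s)).card ≤ s) :
    ∃ f : ℕ → ℕ, Set.InjOn f L ∧
      ∀ x ∈ L, f x ∈ Finset.Icc 1 (2 * t - 2) \ L ∧ f x < x := by
  classical
  set C := Finset.Icc 1 (2 * t - 2) \ L with hCdef
  have hCcard : C.card = t - 1 := by
    rw [hCdef, Finset.card_sdiff_of_subset hL, Nat.card_Icc, hcard]
    omega
  let e := C.orderIsoOfFin hCcard
  set k : ℕ → ℕ := fun x => (L.filter (· ≤ x)).card with hkdef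
  have hk1 : ∀ x ∈ L, 1 ≤ k x := fun x hx =>
    Finset.card_pos.2 ⟨x, Finset.mem_filter.2 ⟨hx, le_refl x⟩⟩
  have hkle : ∀ x, k x ≤ t - 1 := fun x => by
    rw [hkdef, ← hcard]; exact Finset.card_le_card (Finset.filter_subset _ _)
  have hidx : ∀ x ∈ L, k x - 1 < t - 1 := fun x hx => by
    have h1 := hk1 x hx; have h2 := hkle x; omega
  set f : ℕ → ℕ := fun x => if h : k x - 1 < t - 1 then (e ⟨k x - 1, h⟩ : ℕ) else 0
    with hfdef
  -- counting lemma
  have hcount : ∀ x ∈ L, k x ≤ (C.filter (· < x)).card := by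
    intro x hx
    have hxI := hL hx
    rw [Finset.mem_Icc] at hxI
    have hflt : C.filter (· < x) = C.filter (· ≤ x) := by
      ext c
      simp only [Finset.mem_filter, hCdef, Finset.mem_sdiff]
      constructor
      · rintro ⟨h1, h2⟩; exact ⟨h1, h2.le⟩
      · rintro ⟨⟨h1, h2⟩, h3⟩
        refine ⟨⟨h1, h2⟩, lt_of_le_of_ne h3 ?_⟩
        rintro rfl; exact h2 hx
    have hsplit : C.filter (· ≤ x) = Finset.Icc 1 x \ L.filter (· ≤ x) := by
      ext c
      simp only [Finset.mem_filter, hCdef, Finset.mem_sdiff, Finset.mem_Icc]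
      constructor
      · rintro ⟨⟨⟨h1, h2⟩, h3⟩, h4⟩
        exact ⟨⟨h1, h4⟩, fun h => absurd h.1 h3⟩
      · rintro ⟨⟨h1, h2⟩, h3⟩
        have hcl : c ∉ L := fun hc => h3 ⟨hc, h2⟩
        exact ⟨⟨⟨h1, le_trans h2 hxI.2⟩, hcl⟩, h2⟩
    have hsubI : L.filter (· ≤ x) ⊆ Finset.Icc 1 x := by
      intro c hc
      rw [Finset.mem_filter] at hc
      have := hL hc.1
      rw [Finset.mem_Icc] at this ⊢
      exact ⟨this.1, hc.2⟩
    have hcard2 : (C.filter (· ≤ x)).card = x - (L.filter (· ≤ x)).card := by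
      rw [hsplit, Finset.card_sdiff_of_subset hsubI, Nat.card_Icc]
      omega
    have hb := hball x hx
    rw [hflt, hcard2]
    simp only [hkdef]
    omega
  -- key: the j-th smallest element of C is < x when C has ≥ j+1 elements below x
  have hlt : ∀ (j : Fin (t - 1)) (x : ℕ),
      j.val + 1 ≤ (C.filter (· < x)).card → (e j : ℕ) < x := by
    intro j x hj
    by_contra hcon
    push_neg at hcon
    have hsub : C.filter (· < x) ⊆
        Finset.image (fun i : Fin (t - 1) => ((e i : ℕ))) (Finset.Iio j) := by
      intro c hc
      rw [Finset.mem_filter] at hc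
      refine Finset.mem_image.2 ⟨e.symm ⟨c, hc.1⟩, ?_, by simp⟩
      rw [Finset.mem_Iio, ← e.lt_iff_lt, OrderIso.apply_symm_apply]
      exact Subtype.coe_lt_coe.1 (lt_of_lt_of_le hc.2 hcon)
    have h1 := Finset.card_le_card hsub
    have h2 := Finset.card_image_le (s := Finset.Iio j)
      (f := fun i : Fin (t - 1) => ((e i : ℕ)))
    have h3 : (Finset.Iio j).card = j.val := by simp
    omega
  -- monotonicity of k on L
  have kmono : ∀ x ∈ L, ∀ y ∈ L, x < y → k x < k y := by
    intro x hx y hy hxy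
    apply Finset.card_lt_card
    have hsub : L.filter (· ≤ x) ⊆ L.filter (· ≤ y) := by
      intro c hc
      rw [Finset.mem_filter] at hc ⊢
      exact ⟨hc.1, le_trans hc.2 hxy.le⟩
    rw [Finset.ssubset_iff_of_subset hsub]
    refine ⟨y, Finset.mem_filter.2 ⟨hy, le_rfl⟩, fun h => ?_⟩
    rw [Finset.mem_filter] at h
    omega
  refine ⟨f, ?_, ?_⟩
  · intro x hx y hy hxy
    simp only [hfdef, dif_pos (hidx x hx), dif_pos (hidx y hy)] at hxy
    have hj : (⟨k x - 1, hidx x hx⟩ : Fin (t - 1)) = ⟨k y - 1, hidx y hy⟩ :=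
      e.injective (Subtype.ext hxy)
    have hkk : k x - 1 = k y - 1 := Fin.mk.inj_iff.1 hj
    have hkxy : k x = k y := by
      have := hk1 x hx; have := hk1 y hy; omega
    by_contra hne
    rcases lt_or_gt_of_ne hne with h | h
    · have := kmono x hx y hy h; omega
    · have := kmono y hy x hx h; omega
  · intro x hx
    have hd := hidx x hx
    have hfx : f x = (e ⟨k x - 1, hd⟩ : ℕ) := by simp only [hfdef, dif_pos hd]
    constructor
    · rw [hfx]; exact (e ⟨k x - 1, hd⟩).2
    · rw [hfx]
      apply hlt ⟨k x - 1, hd⟩ x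
      have := hk1 x hx
      have := hcount x hx
      simp only []
      omega
end

section
/- Let a_1, ..., a_n be positive integers and k a natural number with k ≤ n/2. Then the number of 0-1 vectors (v_1, ..., v_n) with Σ a_i v_i = k is at most C(n, k). -/
open Finset

lemma choose_mono_of_le_half {n j k : ℕ} (hjk : j ≤ k) (hk : 2 * k ≤ n) :
    n.choose j ≤ n.choose k := by
  induction k with
  | zero => simp [Nat.le_zero.mp hjk]
  | succ m ih =>
    rcases Nat.lt_or_ge j (m+1) with h | h
    · have h1 : 2 * m ≤ n := by omega
      refine (ih (by omega) h1).trans ?_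
      apply Nat.choose_le_succ_of_lt_half_left
      omega
    · have : j = m + 1 := by omega
      simp [this]

lemma antichain_card_le {n k : ℕ} (𝒜 : Finset (Finset (Fin n)))
    (hanti : IsAntichain (· ⊆ ·) (𝒜 : Set (Finset (Fin n))))
    (hsize : ∀ S ∈ 𝒜, S.card ≤ k) (hk : 2 * k ≤ n) :
    𝒜.card ≤ n.choose k := by
  classical
  have hkn : k ≤ n := by omega
  have hchoose_pos : (0 : ℚ) < n.choose k := by
    exact_mod_cast Nat.choose_pos hkn
  have hlym : (∑ r ∈ Finset.range (Fintype.card (Fin n) + 1),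
      ((𝒜 # r).card : ℚ) / (Fintype.card (Fin n)).choose r) ≤ 1 :=
    Finset.sum_card_slice_div_choose_le_one hanti
  simp only [Fintype.card_fin] at hlym
  have key : (𝒜.card : ℚ) / n.choose k ≤ 1 := by
    have hsum : ∑ r ∈ Finset.range (n + 1), ((𝒜 # r).card : ℚ) = 𝒜.card := by
      have hIic : Finset.range (n + 1) = Finset.Iic n := by
        ext r; simp [Nat.lt_succ_iff]
      rw [hIic, ← Nat.cast_sum]
      norm_cast
      simpa using Finset.sum_card_slice (𝒜 := 𝒜)
    rw [← hsum, Finset.sum_div]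
    refine le_trans (Finset.sum_le_sum ?_) hlym
    intro r _
    rcases Finset.eq_empty_or_nonempty (𝒜 # r) with h | h
    · simp [h]
    · obtain ⟨S, hS⟩ := h
      have hSr := Finset.mem_slice.mp hS
      have hr : r ≤ k := hSr.2 ▸ hsize S hSr.1
      apply div_le_div_of_nonneg_left (by positivity) ?_ ?_
      · exact_mod_cast Nat.choose_pos (by omega)
      · exact_mod_cast choose_mono_of_le_half hr hk
  have := (div_le_one hchoose_pos).mp key
  exact_mod_cast this

/-- for positive integers `a₁, …, a_n` and `k ≤ n/2`, the number
of 0-1 vectors `v` with `Σ aᵢ vᵢ = k` is at most `C(n, k)`. -/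
theorem stmt6 (n k : ℕ) (a : Fin n → ℕ) (ha : ∀ i, 0 < a i) (hk : 2 * k ≤ n) :
    (Finset.univ.filter
        (fun v : Fin n → Bool => ∑ i, a i * (if v i then 1 else 0) = k)).card
      ≤ n.choose k := by
  classical
  have hcard : (Finset.univ.filter
      (fun v : Fin n → Bool => ∑ i, a i * (if v i then 1 else 0) = k)).card
      = (Finset.univ.filter (fun S : Finset (Fin n) => ∑ i ∈ S, a i = k)).card := by
    apply Finset.card_bij (fun v _ => Finset.univ.filter (fun i => v i = true))
    · intro v hv
      simp only [Finset.mem_filter, Finset.mem_univ, true_and] at hv ⊢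
      rw [← hv, Finset.sum_filter]
      congr 1
      ext i
      cases v i <;> simp
    · intro v hv w hw h
      funext i
      have := Finset.ext_iff.mp h i
      simp only [Finset.mem_filter, Finset.mem_univ, true_and] at this
      cases hvi : v i <;> cases hwi : w i <;> simp_all
    · intro S hS
      simp only [Finset.mem_filter, Finset.mem_univ, true_and] at hS
      refine ⟨fun i => i ∈ S, ?_, ?_⟩
      · simp only [Finset.mem_filter, Finset.mem_univ, true_and]
        rw [← hS]
        rw [Finset.sum_congr rfl (fun i _ => by
          cases h : decide (i ∈ S) <;> simp_all : ∀ i ∈ Finset.univ,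
            (a i * if decide (i ∈ S) = true then 1 else 0) = if i ∈ S then a i else 0)]
        rw [Finset.sum_ite_mem, Finset.univ_inter]
      · ext i; simp
  rw [hcard]
  apply antichain_card_le _ _ _ hk
  · intro S hS T hT hne hsub
    simp only [Finset.coe_filter, Set.mem_setOf_eq, Finset.mem_univ, true_and] at hS hT
    have hlt : ∑ i ∈ S, a i < ∑ i ∈ T, a i := by
      obtain ⟨x, hxT, hxS⟩ := Finset.exists_of_ssubset (lt_of_le_of_ne hsub hne)
      exact Finset.sum_lt_sum_of_subset hsub hxT hxS (ha x) (fun _ _ _ => Nat.zero_le _)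
    exact absurd (hS.trans hT.symm) (Nat.ne_of_lt hlt)
  · intro S hS
    simp only [Finset.mem_filter] at hS
    calc S.card = ∑ _i ∈ S, 1 := by simp
    _ ≤ ∑ i ∈ S, a i := Finset.sum_le_sum (fun i _ => ha i)
    _ = k := hS.2
end

section
/- Let 0 < a_1 ≤ a_2 ≤ ... ≤ a_n be integers, t > 1 an integer with t ≤ n/2, T ∈ H_t, and k' a positive integer. Then it cannot happen that both: (i) there is a subset F ⊆ [2t-1] with T ⊆ F and Σ_{i∈F} a_i = k', and (ii) there is a subset G ⊆ [2t-1] with G ∩ T = ∅ and Σ_{i∈G} a_i = k'. -/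
open Finset

theorem Finset.filter_le_max'_filter_lt {α : Type*} [LinearOrder α] (s : Finset α) (m : α)
    (h : (s.filter (· < m)).Nonempty) :
    s.filter (· ≤ (s.filter (· < m)).max' h) = s.filter (· < m) := by
  ext x
  simp only [mem_filter, and_congr_right_iff]
  intro hx
  exact ⟨fun hle => hle.trans_lt (mem_filter.mp (max'_mem _ h)).2,
    fun hlt => le_max' _ x (mem_filter.mpr ⟨hx, hlt⟩)⟩

theorem Finset.sum_le_sum_of_card_filter_le {α M : Type*} [LinearOrder α] [AddCommMonoid M]
    [PartialOrder M] [IsOrderedAddMonoid M] [CanonicallyOrderedAdd M] {a : α → M}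
    {s u : Finset α} (ha : ∀ x ∈ s, ∀ y ∈ u, x ≤ y → a x ≤ a y)
    (hcard : ∀ m ∈ s, #(s.filter (m ≤ ·)) ≤ #(u.filter (m ≤ ·))) :
    ∑ x ∈ s, a x ≤ ∑ y ∈ u, a y := by
  induction s using Finset.induction_on_max generalizing u with
  | empty => simp
  | insert x s hxs ih =>
    -- pair the largest element `x` of `s` with the largest element of `u`
    have hx : x ∈ insert x s := mem_insert_self x s
    have hxs' : x ∉ s := fun h => (hxs x h).false
    obtain ⟨z, hz⟩ : (u.filter (x ≤ ·)).Nonempty := by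
      rw [← card_pos]
      exact (card_pos.mpr ⟨x, by simp⟩).trans_le (hcard x hx)
    obtain ⟨hzu, hxz⟩ := mem_filter.mp hz
    have hu : u.Nonempty := ⟨z, hzu⟩
    have hyu : u.max' hu ∈ u := max'_mem u hu
    have hxy : x ≤ u.max' hu := hxz.trans (le_max' u z hzu)
    set y := u.max' hu
    have hcard_erase : ∀ m ∈ s, #(s.filter (m ≤ ·)) ≤ #((u.erase y).filter (m ≤ ·)) := by
      intro m hm
      have hmy : m ≤ y := (hxs m hm).le.trans hxy
      have := hcard m (mem_insert_of_mem hm)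
      rw [filter_insert, if_pos (hxs m hm).le, card_insert_of_notMem (by simp [hxs'])] at this
      rw [filter_erase, card_erase_of_mem (mem_filter.mpr ⟨hyu, hmy⟩)]
      exact Nat.le_sub_one_of_lt this
    calc ∑ z ∈ insert x s, a z = a x + ∑ z ∈ s, a z := sum_insert hxs'
      _ ≤ a y + ∑ z ∈ u.erase y, a z :=
        add_le_add (ha x hx y hyu hxy) (ih (fun z hz w hw => ha z (mem_insert_of_mem hz) w
          (mem_of_mem_erase hw)) hcard_erase)
      _ = ∑ z ∈ u, a z := add_sum_erase u a hyu

namespace Ht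

variable {n t : ℕ} {T : Finset ℕ}

theorem two_mul_card_filter_lt (hT : Ht n t T) {m : ℕ} (h0 : 0 < #(T.filter (· < m)))
    (ht : #(T.filter (· < m)) < t) : 2 * #(T.filter (· < m)) < m := by
  have hne : (T.filter (· < m)).Nonempty := card_pos.mp h0
  have hmem := mem_filter.mp (max'_mem _ hne)
  have := hT.2.2.1 _ hmem.1
  rw [T.filter_le_max'_filter_lt m hne] at this
  exact (this ht).trans_lt hmem.2

theorem card_filter_sdiff_le (hT : Ht n t T) (ht : 1 < t) {m : ℕ}
    (hm : m ∈ Icc 1 (2 * t - 1) \ T) :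
    #((Icc 1 (2 * t - 1) \ T).filter (m ≤ ·)) ≤ #((T.erase (2 * t - 1)).filter (m ≤ ·)) := by
  obtain ⟨hNT, hTN⟩ := hT.isGreatest ht
  obtain ⟨hm, hmT⟩ := mem_sdiff.mp hm
  rw [mem_Icc] at hm
  have hlow : 2 * #(T.filter (· < m)) < m := by
    rcases Nat.eq_zero_or_pos #(T.filter (· < m)) with h0 | h0
    · omega
    refine hT.two_mul_card_filter_lt h0 ?_
    rw [← hT.2.1]
    refine card_lt_card ⟨filter_subset _ _, fun h => ?_⟩
    have := (mem_filter.mp (h hNT)).2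
    omega
  have hsplit := T.card_filter_add_card_filter_not (m ≤ ·)
  simp only [not_le] at hsplit
  have hinter : T ∩ Icc m (2 * t - 1) = T.filter (m ≤ ·) := by
    ext x
    simp only [mem_inter, mem_filter, mem_Icc, and_congr_right_iff]
    exact fun hx => ⟨And.left, fun hmx => ⟨hmx, hTN hx⟩⟩
  have hC : (Icc 1 (2 * t - 1) \ T).filter (m ≤ ·) = Icc m (2 * t - 1) \ T := by
    ext x
    simp only [mem_filter, mem_sdiff, mem_Icc]
    grind
  have herase : #((T.erase (2 * t - 1)).filter (m ≤ ·)) = #(T.filter (m ≤ ·)) - 1 := by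
    rw [filter_erase, card_erase_of_mem (mem_filter.mpr ⟨hNT, hm.2⟩)]
  rw [hC, card_sdiff, hinter, Nat.card_Icc, herase]
  rw [hT.2.1] at hsplit
  omega

end Ht

theorem stmt9_general (n t : ℕ) (a : ℕ → ℕ)
    (hpos : ∀ i ∈ Finset.Icc 1 n, 0 < a i)
    (hmono : ∀ i j, 1 ≤ i → i ≤ j → j ≤ n → a i ≤ a j)
    (ht : 1 < t) (htn : 2 * t ≤ n) (T : Finset ℕ) (hT : Ht n t T)
    (k' : ℕ) :
    ¬ ((∃ F, F ⊆ Finset.Icc 1 (2 * t - 1) ∧ T ⊆ F ∧ (∑ i ∈ F, a i) = k') ∧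
       (∃ G, G ⊆ Finset.Icc 1 (2 * t - 1) ∧ G ∩ T = ∅ ∧ (∑ i ∈ G, a i) = k')) := by
  rintro ⟨⟨F, -, hTF, rfl⟩, G, hG, hGT, hGF⟩
  obtain ⟨hNT, hTN⟩ := hT.isGreatest ht
  have hGC : G ⊆ Icc 1 (2 * t - 1) \ T := fun x hx =>
    mem_sdiff.mpr ⟨hG hx, fun hxT => by simpa [hGT] using mem_inter.mpr ⟨hx, hxT⟩⟩
  have ha : ∀ x ∈ Icc 1 (2 * t - 1) \ T, ∀ y ∈ T.erase (2 * t - 1), x ≤ y → a x ≤ a y :=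
    fun x hx y hy hxy => hmono x y (mem_Icc.mp (mem_sdiff.mp hx).1).1 hxy
      (by have := hTN (mem_of_mem_erase hy); omega)
  have hlt : ∑ i ∈ G, a i < ∑ i ∈ F, a i :=
    calc ∑ i ∈ G, a i ≤ ∑ i ∈ Icc 1 (2 * t - 1) \ T, a i := sum_le_sum_of_subset hGC
      _ ≤ ∑ i ∈ T.erase (2 * t - 1), a i :=
        sum_le_sum_of_card_filter_le ha fun m hm => hT.card_filter_sdiff_le ht hm
      _ < ∑ i ∈ T, a i := sum_erase_lt_of_pos hNT (hpos _ (mem_Icc.mpr ⟨by omega, by omega⟩))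
      _ ≤ ∑ i ∈ F, a i := sum_le_sum_of_subset hTF
  exact hlt.ne hGF

/-- for `0 < a₁ ≤ … ≤ a_n`, `1 < t ≤ n/2`, `T ∈ H_t` and a positive
integer `k'`, it cannot happen that both some `F ⊆ [2t-1]` with `T ⊆ F` has
weight `k'` and some `G ⊆ [2t-1]` disjoint from `T` has weight `k'`. -/
theorem stmt9 (n t : ℕ) (a : ℕ → ℕ)
    (hpos : ∀ i ∈ Finset.Icc 1 n, 0 < a i)
    (hmono : ∀ i j, 1 ≤ i → i ≤ j → j ≤ n → a i ≤ a j)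
    (ht : 1 < t) (htn : 2 * t ≤ n) (T : Finset ℕ) (hT : Ht n t T)
    (k' : ℕ) (hk' : 0 < k') :
    ¬ ((∃ F, F ⊆ Finset.Icc 1 (2 * t - 1) ∧ T ⊆ F ∧ (∑ i ∈ F, a i) = k') ∧
       (∃ G, G ⊆ Finset.Icc 1 (2 * t - 1) ∧ G ∩ T = ∅ ∧ (∑ i ∈ G, a i) = k')) :=
  stmt9_general n t a hpos hmono ht htn T hT k'
end
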